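/- The yield of an adjoined tree decomposes multiplicatively up to Parikh equivalence: if T' = C[α[X(T1,...,Tn)]] is obtained from T = C[X(T1,...,Tn)] by adjoining α, then Y(T') is a word whose Parikh vector equals Φ_A(Y(T)) + Φ_A(Y(α[X(ε)])). -/

import Mathlib

/-- Trees whose internal nodes are labeled by nonterminals in `V`
and whose leaves are labeled by elements of `L`. -/
inductive PTree (V L : Type) : Type
  | leaf : L → PTree V L
  | node : V → List (PTree V L) → PTree V L

namespace PTree

variable {V A L : Type}

/-- Leaf alphabet for contexts/adjunct trees: a letter-or-ε leaf, or the hole. -/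
abbrev Aug (A : Type) := Option A ⊕ Unit

/-- The root label of a tree: a nonterminal or a leaf label. -/
def rootLabel : PTree V L → V ⊕ L
  | .leaf a => .inr a
  | .node X _ => .inl X

/-- Set of nonterminals occurring in a tree. -/
def ntSet : PTree V L → Set V
  | .leaf _ => ∅
  | .node X ts => insert X ((ts.attach.map (fun ⟨t, _⟩ => ntSet t)).foldr (· ∪ ·) ∅)

/-- A tree is simple if no nonterminal occurs twice on a root-to-leaf path. -/
def Simple : PTree V L → Prop
  | .leaf _ => True
  | .node X ts => ∀ t ∈ ts, X ∉ ntSet t ∧ Simple t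

/-- Number of holes in a context / adjunct tree. -/
def holes : PTree V (Aug A) → ℕ
  | .leaf (.inr _) => 1
  | .leaf (.inl _) => 0
  | .node _ ts => (ts.attach.map (fun ⟨t, _⟩ => holes t)).sum

/-- Substitute the tree `T` for every hole. -/
def subst (T : PTree V (Option A)) : PTree V (Aug A) → PTree V (Option A)
  | .leaf (.inl a) => .leaf a
  | .leaf (.inr _) => T
  | .node X ts => .node X (ts.attach.map (fun ⟨t, _⟩ => subst T t))

/-- Embed a `(V,A)`-tree into trees with holes (no holes created). -/
def toAug : PTree V (Option A) → PTree V (Aug A)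
  | .leaf a => .leaf (.inl a)
  | .node X ts => .node X (ts.attach.map (fun ⟨t, _⟩ => toAug t))

/-- Yield of a `(V,A)`-tree. -/
def yield : PTree V (Option A) → List A
  | .leaf none => []
  | .leaf (some a) => [a]
  | .node _ ts => (ts.attach.map (fun ⟨t, _⟩ => yield t)).flatten

/-- Yield of a context / adjunct tree, holes contributing `ε`. -/
def yieldA : PTree V (Aug A) → List A
  | .leaf (.inl none) => []
  | .leaf (.inl (some a)) => [a]
  | .leaf (.inr _) => []
  | .node _ ts => (ts.attach.map (fun ⟨t, _⟩ => yieldA t)).flatten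

/-- Height of a tree. -/
def height : PTree V L → ℕ
  | .leaf _ => 0
  | .node _ ts => (ts.attach.map (fun ⟨t, _⟩ => height t)).foldr max 0 + 1

/-- Size (number of nodes) of a tree. -/
def tsize : PTree V L → ℕ
  | .leaf _ => 1
  | .node _ ts => (ts.attach.map (fun ⟨t, _⟩ => tsize t)).sum + 1

end PTree

open PTree

/-- A context-free grammar over `A` with nonterminals `V`:
a finite set of rules `D ⊆ V × (V ∪ A ∪ {ε})⁺` and a start symbol. -/
structure CFG (V A : Type) where
  rules : Set (V × List (V ⊕ Option A))
  rules_fin : rules.Finite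
  start : V

variable {V A : Type}

/-- A tree is a valid derivation w.r.t. the rules `D`. -/
inductive IsDeriv (D : Set (V × List (V ⊕ Option A))) : PTree V (Option A) → Prop
  | leaf (a : Option A) : IsDeriv D (.leaf a)
  | node (X : V) (ts : List (PTree V (Option A))) :
      (X, ts.map rootLabel) ∈ D → (∀ t ∈ ts, IsDeriv D t) → IsDeriv D (.node X ts)

/-- The set `Trees(G)` of derivation trees of `G`. -/
def TreesSet (G : CFG V A) : Set (PTree V (Option A)) :=
  {T | T.rootLabel = .inl G.start ∧ IsDeriv G.rules T}

/-- The language of `G`: yields of derivation trees. -/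
def lang (G : CFG V A) : Set (List A) := PTree.yield '' TreesSet G

/-- An adjunct tree is represented by its root nonterminal `X` together with a tree
over `V, A ∪ {X}` (the distinguished leaf `X` being the hole). -/
abbrev AdjT (V A : Type) := V × PTree V (Aug A)

/-- Wellformedness of an adjunct tree: root node labeled `X`, exactly one `X`-leaf. -/
def WFAdjunct (p : AdjT V A) : Prop :=
  (∃ ts, p.2 = PTree.node p.1 ts) ∧ p.2.holes = 1

/-- A simple adjunct tree: no nonterminal repeats on paths from a child of the root. -/
def SimpleAdjunct (p : AdjT V A) : Prop :=
  ∃ ts, p.2 = PTree.node p.1 ts ∧ ∀ t ∈ ts, Simple t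

/-- Root label of a subtree of an adjunct tree with root nonterminal `X`:
the hole leaf is labeled `X`. -/
def augRoot (X : V) : PTree V (Aug A) → V ⊕ Option A
  | .leaf (.inl a) => .inr a
  | .leaf (.inr _) => .inl X
  | .node Y _ => .inl Y

/-- An adjunct tree is extracted from derivation trees of `D`: every internal
node respects the rules. -/
inductive IsDerivA (D : Set (V × List (V ⊕ Option A))) (X : V) : PTree V (Aug A) → Prop
  | leaf (a : Aug A) : IsDerivA D X (.leaf a)
  | node (Y : V) (ts : List (PTree V (Aug A))) :
      (Y, ts.map (augRoot X)) ∈ D → (∀ t ∈ ts, IsDerivA D X t) → IsDerivA D X (.node Y ts)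

/-- `T ⊢_α T'` : `T'` is obtained from `T` by adjoining the adjunct tree `α`
at some occurrence of its root nonterminal. -/
def Adjoins (α : AdjT V A) (T T' : PTree V (Option A)) : Prop :=
  WFAdjunct α ∧
  ∃ (C : PTree V (Aug A)) (ts : List (PTree V (Option A))),
    C.holes = 1 ∧
    subst (.node α.1 ts) C = T ∧
    subst (subst (.node α.1 ts) α.2) C = T'

/-- `AdjChain L T T'` : `T'` is obtained from `T` by successively adjoining
the adjunct trees listed in `L`. -/
def AdjChain : List (AdjT V A) → PTree V (Option A) → PTree V (Option A) → Prop
  | [], T, T' => T = T'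
  | α :: L, T, T' => ∃ T₁, Adjoins α T T₁ ∧ AdjChain L T₁ T'

/-- `Adj⁺(T,S)` : trees obtained from `T` using exactly the adjunct trees of `S`,
each at least once. -/
def AdjPlus (T : PTree V (Option A)) (S : Set (AdjT V A)) : Set (PTree V (Option A)) :=
  {T' | ∃ L : List (AdjT V A), AdjChain L T T' ∧ {α | α ∈ L} = S}

/-- `Adj(T,S)` : trees obtained from `T` using adjunct trees of `S`, arbitrarily often. -/
def AdjStar (T : PTree V (Option A)) (S : Set (AdjT V A)) : Set (PTree V (Option A)) :=
  {T' | ∃ L : List (AdjT V A), AdjChain L T T' ∧ {α | α ∈ L} ⊆ S}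

namespace PTree
variable [DecidableEq V]

mutual
/-- Find the leftmost `X`-rooted subtree: returns the surrounding context
(with a hole in its place) and the subtree. -/
def extract (X : V) : PTree V (Option A) → Option (PTree V (Aug A) × PTree V (Option A))
  | .leaf _ => none
  | .node Y ts =>
    if Y = X then some (.leaf (.inr ()), .node Y ts)
    else match extractL X ts with
      | none => none
      | some (Cs, sub) => some (.node Y Cs, sub)

/-- List version of `extract`. -/
def extractL (X : V) : List (PTree V (Option A)) → Option (List (PTree V (Aug A)) × PTree V (Option A))
  | [] => none
  | t :: ts =>
    match extract X t with
    | some (C, sub) => some (C :: ts.map toAug, sub)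
    | none =>
      match extractL X ts with
      | some (Cs, sub) => some (toAug t :: Cs, sub)
      | none => none
end

/-- Takahashi's decomposition of a tree into a simple tree and a set of
simple adjunct trees. -/
def decomp : PTree V (Option A) → PTree V (Option A) × Set (AdjT V A)
  | .leaf a => (.leaf a, ∅)
  | .node X ts =>
    let rs := ts.attach.map (fun ⟨t, _⟩ => decomp t)
    let S := (rs.map Prod.snd).foldr (· ∪ ·) ∅
    match extractL X (rs.map Prod.fst) with
    | none => (.node X (rs.map Prod.fst), S)
    | some (Cs, sub) => (sub, insert (X, PTree.node X Cs) S)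

end PTree

/-- The simple trees arising from decompositions of derivation trees. -/
def sTrees (G : CFG V A) [DecidableEq V] : Set (PTree V (Option A)) :=
  {T' | ∃ T ∈ TreesSet G, (decomp T).1 = T'}

/-- The simple adjunct trees arising from decompositions of derivation trees. -/
def sLoops (G : CFG V A) [DecidableEq V] : Set (AdjT V A) :=
  {α | ∃ T ∈ TreesSet G, α ∈ (decomp T).2}

/-- Parikh map. -/
def parikh [DecidableEq A] (w : List A) : A → ℕ := fun a => w.count a

/-- Linear subsets of `ℕ^A`. -/
def IsLinear (S : Set (A → ℕ)) : Prop :=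
  ∃ (v₀ : A → ℕ) (k : ℕ) (v : Fin k → A → ℕ),
    S = {u | ∃ x : Fin k → ℕ, u = v₀ + ∑ i, x i • v i}

/-- Semilinear subsets of `ℕ^A`: finite unions of linear sets. -/
def IsSemilinear (S : Set (A → ℕ)) : Prop :=
  ∃ (n : ℕ) (f : Fin n → Set (A → ℕ)), (∀ i, IsLinear (f i)) ∧ S = ⋃ i, f i

section

variable [DecidableEq A]

@[simp]
lemma parikh_nil : parikh ([] : List A) = 0 := by
  funext a; simp [parikh]

lemma parikh_append (u v : List A) : parikh (u ++ v) = parikh u + parikh v := by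
  funext a; simp [parikh, List.count_append]

lemma parikh_flatten (l : List (List A)) : parikh l.flatten = (l.map parikh).sum := by
  induction l with
  | nil => simp
  | cons u l ih => simp [parikh_append, ih]

namespace PTree

lemma parikh_yield_subst (T : PTree V (Option A)) :
    ∀ C : PTree V (Aug A),
      parikh (yield (subst T C)) = parikh (yieldA C) + C.holes • parikh (yield T)
  | .leaf (.inl none) => by simp [subst, yield, yieldA, holes]
  | .leaf (.inl (some _)) => by simp [subst, yield, yieldA, holes]
  | .leaf (.inr _) => by simp [subst, yieldA, holes]
  | .node _ cs => by
      have ih : ∀ c ∈ cs,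
          parikh (yield (subst T c)) = parikh (yieldA c) + c.holes • parikh (yield T) :=
        fun c _ => parikh_yield_subst T c
      simp only [subst, yield, yieldA, holes, List.attach_map_val, List.map_map,
        parikh_flatten, List.sum_smul, ← List.sum_map_add]
      exact congrArg List.sum (List.map_congr_left ih)

lemma parikh_yield_subst_of_holes_eq_one (T : PTree V (Option A)) {C : PTree V (Aug A)}
    (hC : C.holes = 1) : parikh (yield (subst T C)) = parikh (yieldA C) + parikh (yield T) := by
  rw [parikh_yield_subst, hC, one_smul]

end PTree

end

/-- If `T' = C[α[X(T₁,…,Tₙ)]]` is obtained from `T = C[X(T₁,…,Tₙ)]` by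
adjoining `α`, then `Φ(Y(T')) = Φ(Y(T)) + Φ(Y(α[X(ε)]))`. -/
theorem yield_adjoin {V A : Type} [DecidableEq A] (C : PTree V (Aug A)) (X : V)
    (ts : List (PTree V (Option A))) (α : AdjT V A)
    (hα : WFAdjunct α) (hX : α.1 = X) (hC : C.holes = 1) :
    parikh (PTree.yield (PTree.subst (PTree.subst (PTree.node X ts) α.2) C)) =
      parikh (PTree.yield (PTree.subst (PTree.node X ts) C)) +
        parikh (PTree.yieldA α.2) := by
  rw [parikh_yield_subst_of_holes_eq_one _ hC, parikh_yield_subst_of_holes_eq_one _ hC,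
    parikh_yield_subst_of_holes_eq_one _ hα.2]
  abel
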